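/- arXiv:1509.04364 — 2 statements merged into one kernel-verified Lean document; each statement's English description precedes it below -/
import Mathlib

section
/- Let P : ℝ → ℝ be continuous, 1-periodic, with ∫₀¹ P(s) ds = 0, and let φ : ℝ → ℝ be continuously differentiable with φ and φ' Lebesgue integrable on ℝ and φ(x) → 0 as |x| → ∞. Then for every ε > 0, |∫_ℝ P(x/ε) φ(x) dx| ≤ ε (∫₀¹ |P(s)| ds) (∫_ℝ |φ'(x)| dx). -/
/-!
Since `P` has mean zero, its primitive `Q t = ∫₀ᵗ P` is `1`-periodic, hence bounded by
`∫₀¹ |P|`. Then `x ↦ ε Q (x / ε)` is a primitive of `x ↦ P (x / ε)` bounded by `ε ∫₀¹ |P|`, and a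
single integration by parts over `ℝ` moves the derivative onto `φ`.
-/

open MeasureTheory Filter

namespace Function.Periodic

variable {f : ℝ → ℝ} {T : ℝ}

theorem primitive_periodic_of_integral_eq_zero (hf : Periodic f T)
    (hfi : ∀ a b, IntervalIntegrable f volume a b) (h0 : ∫ x in 0..T, f x = 0) :
    Periodic (fun t => ∫ x in 0..t, f x) T := fun t => by
  simp only [hf.intervalIntegral_add_eq_add 0 t hfi, zero_add, h0, add_zero]

theorem abs_primitive_le_integral_abs (hf : Periodic f T) (hT : 0 < T)
    (hfi : IntervalIntegrable f volume 0 T) (h0 : ∫ x in 0..T, f x = 0) (t : ℝ) :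
    |∫ x in 0..t, f x| ≤ ∫ x in 0..T, |f x| := by
  have hfi' := hf.intervalIntegrable₀ hT.ne' hfi
  obtain ⟨s, ⟨hs0, hsT⟩, hs⟩ :=
    (hf.primitive_periodic_of_integral_eq_zero hfi' h0).exists_mem_Ico₀ hT t
  calc |∫ x in 0..t, f x| = |∫ x in 0..s, f x| := by rw [hs]
    _ ≤ ∫ x in 0..s, |f x| := intervalIntegral.abs_integral_le_integral_abs hs0
    _ ≤ ∫ x in 0..T, |f x| :=
      intervalIntegral.integral_mono_interval le_rfl hs0 hsT.le
        (ae_of_all _ fun _ => abs_nonneg _) hfi.abs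

end Function.Periodic

theorem abs_integral_mul_le_of_hasDerivAt {U u φ φ' : ℝ → ℝ} {B : ℝ}
    (hU : ∀ x, HasDerivAt U (u x) x) (hUB : ∀ x, |U x| ≤ B)
    (hφ : ∀ x, HasDerivAt φ (φ' x) x) (hφi : Integrable φ) (hφ'i : Integrable φ') :
    |∫ x, u x * φ x| ≤ B * ∫ x, |φ' x| := by
  by_cases huφ : Integrable fun x => u x * φ x
  · have hUm : AEStronglyMeasurable U :=
      (continuous_iff_continuousAt.2 fun x => (hU x).continuousAt).aestronglyMeasurable
    have hUB' : ∀ᵐ x, ‖U x‖ ≤ B := ae_of_all _ hUB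
    have ibp := integral_mul_deriv_eq_deriv_mul_of_integrable (fun x _ => hU x) (fun x _ => hφ x)
      (hφ'i.bdd_mul hUm hUB') huφ (hφi.bdd_mul hUm hUB')
    calc |∫ x, u x * φ x| = |∫ x, U x * φ' x| := by rw [ibp, abs_neg]
      _ ≤ ∫ x, |U x * φ' x| := abs_integral_le_integral_abs
      _ ≤ ∫ x, B * |φ' x| :=
        integral_mono_of_nonneg (ae_of_all _ fun _ => abs_nonneg _) (hφ'i.abs.const_mul B)
          (ae_of_all _ fun x => (abs_mul _ _).trans_le
            (mul_le_mul_of_nonneg_right (hUB x) (abs_nonneg _)))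
      _ = B * ∫ x, |φ' x| := integral_const_mul B _
  · rw [integral_undef huφ, abs_zero]
    exact mul_nonneg ((abs_nonneg _).trans (hUB 0)) (integral_nonneg fun _ => abs_nonneg _)

theorem stmt_6_general (P : ℝ → ℝ) (hPcont : Continuous P)
    (hPper : ∀ x : ℝ, P (x + 1) = P x)
    (hPavg : ∫ s in (0:ℝ)..1, P s = 0)
    (φ : ℝ → ℝ) (hφ : ContDiff ℝ 1 φ)
    (hφint : Integrable φ) (hφ'int : Integrable (deriv φ)) :
    ∀ ε : ℝ, 0 < ε →
      |∫ x : ℝ, P (x / ε) * φ x| ≤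
        ε * (∫ s in (0:ℝ)..1, |P s|) * ∫ x : ℝ, |deriv φ x| := by
  intro ε hε
  set Q : ℝ → ℝ := fun t => ∫ s in (0:ℝ)..t, P s
  have hQ' : ∀ x, HasDerivAt (fun x => ε * Q (x / ε)) (P (x / ε)) x := fun x => by
    refine (((hPcont.integral_hasStrictDerivAt 0 (x / ε)).hasDerivAt.comp x
      ((hasDerivAt_id x).div_const ε)).const_mul ε).congr_deriv ?_
    field_simp
  have hQB : ∀ x, |ε * Q (x / ε)| ≤ ε * ∫ s in (0:ℝ)..1, |P s| := fun x => by
    rw [abs_mul, abs_of_pos hε]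
    exact mul_le_mul_of_nonneg_left (Function.Periodic.abs_primitive_le_integral_abs hPper
      one_pos (hPcont.intervalIntegrable 0 1) hPavg (x / ε)) hε.le
  exact abs_integral_mul_le_of_hasDerivAt hQ' hQB
    (fun x => (hφ.differentiable one_ne_zero x).hasDerivAt) hφint hφ'int

theorem stmt_6 (P : ℝ → ℝ) (hPcont : Continuous P)
    (hPper : ∀ x : ℝ, P (x + 1) = P x)
    (hPavg : ∫ s in (0:ℝ)..1, P s = 0)
    (φ : ℝ → ℝ) (hφ : ContDiff ℝ 1 φ)
    (hφint : Integrable φ) (hφ'int : Integrable (deriv φ))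
    (hφ0 : Tendsto φ (cocompact ℝ) (nhds 0)) :
    ∀ ε : ℝ, 0 < ε →
      |∫ x : ℝ, P (x / ε) * φ x| ≤
        ε * (∫ s in (0:ℝ)..1, |P s|) * ∫ x : ℝ, |deriv φ x| :=
  stmt_6_general P hPcont hPper hPavg φ hφ hφint hφ'int
end

section
/- Let d ≥ 1, let P : ℝ^d → ℝ be continuous, ℤ^d-periodic, with cell average ⟨P⟩ = ∫_{[0,1]^d} P(x) dx = 0, and let φ : ℝ^d → ℝ be a Schwartz function. Then for every natural number k, lim_{ε→0⁺} ε^{−k} ∫_{ℝ^d} P(x/ε) φ(x) dx = 0. -/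
/-!
Write `R = ∑ᵢ ∂ᵢ Qᵢ` with continuous ℤ^d-periodic potentials `Qᵢ` of zero cell average.
Averaging `R` over the unit interval in the coordinates `0, …, i - 1` gives functions
`Aᵢ = partialAvg R i` with `A₀ = R`, `A_d = ⟨R⟩ = 0`, and `Aᵢ - Aᵢ₊₁` of zero mean along the `i`-th coordinate, so that
its primitive in that coordinate is periodic. Integrating by parts,
`∫ R (x / ε) φ x dx = -ε ∑ᵢ ∫ Qᵢ (x / ε) ∂ᵢφ x dx`. Each `Qᵢ` (shifted by its mean) is again
periodic with zero average and `∂ᵢφ` is again Schwartz, so induction on `k` gives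
`∫ R (x / ε) φ x dx = O(εᵏ)` for every `k`.
-/

open MeasureTheory Filter Set Function Topology LineDeriv SchwartzMap

namespace PeriodicOscillation

variable {d : ℕ}

def IsIntPeriodic (f : (Fin d → ℝ) → ℝ) : Prop :=
  ∀ (x : Fin d → ℝ) (k : Fin d → ℤ), f (x + fun i => (k i : ℝ)) = f x

theorem setIntegral_Icc_zero_one_const (c : ℝ) : ∫ _ in Icc (0 : Fin d → ℝ) 1, c = c := by
  simp [measureReal_def, Real.volume_Icc_pi]

namespace IsIntPeriodic

variable {f : (Fin d → ℝ) → ℝ}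

theorem exists_bound (hc : Continuous f) (hp : IsIntPeriodic f) : ∃ C, ∀ x, ‖f x‖ ≤ C := by
  obtain ⟨C, hC⟩ := (isCompact_Icc (a := (0 : Fin d → ℝ)) (b := 1)).exists_bound_of_continuousOn
    hc.continuousOn
  refine ⟨C, fun x => ?_⟩
  have hfract : f x = f fun i => Int.fract (x i) := by
    rw [← hp (fun i => Int.fract (x i)) fun i => ⌊x i⌋]
    congr 1
    ext i
    exact (Int.fract_add_floor (x i)).symm
  exact hfract ▸ hC _ ⟨fun i => Int.fract_nonneg _, fun i => (Int.fract_lt_one _).le⟩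

theorem update_add (hp : IsIntPeriodic f) (x : Fin d → ℝ) (k : Fin d → ℤ) (i : Fin d) (t : ℝ) :
    f (update (x + fun j => (k j : ℝ)) i t) = f (update x i t) := by
  convert hp (update x i t) (update k i 0) using 2
  ext j
  rcases eq_or_ne j i with rfl | hj <;> simp [*]

theorem periodic_update (hp : IsIntPeriodic f) (x : Fin d → ℝ) (i : Fin d) :
    Periodic (fun t => f (update x i t)) 1 := fun t => by
  convert hp (update x i t) (Pi.single i 1) using 2
  ext j
  rcases eq_or_ne j i with rfl | hj <;> simp [*]

end IsIntPeriodic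

noncomputable def coordAvg (i : Fin d) (f : (Fin d → ℝ) → ℝ) (x : Fin d → ℝ) : ℝ :=
  ∫ t in (0 : ℝ)..1, f (update x i t)

section coordAvg

variable {f : (Fin d → ℝ) → ℝ}

theorem continuous_coordAvg (i : Fin d) (hf : Continuous f) : Continuous (coordAvg i f) :=
  intervalIntegral.continuous_parametric_intervalIntegral_of_continuous'
    (f := fun x t => f (update x i t)) (hf.comp (continuous_fst.update i continuous_snd)) 0 1

theorem isIntPeriodic_coordAvg (i : Fin d) (hp : IsIntPeriodic f) :
    IsIntPeriodic (coordAvg i f) := fun x k => by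
  simp only [coordAvg, hp.update_add]

theorem coordAvg_update_self (i : Fin d) (x : Fin d → ℝ) (t : ℝ) :
    coordAvg i f (update x i t) = coordAvg i f x := by
  simp [coordAvg]

theorem coordAvg_update_of_ne {i j : Fin d} (hji : j ≠ i) (h : ∀ x t, f (update x j t) = f x)
    (x : Fin d → ℝ) (t : ℝ) : coordAvg i f (update x j t) = coordAvg i f x := by
  simp only [coordAvg, update_comm hji, h]

theorem setIntegral_Icc_eq_integral_insertNth {n : ℕ} (i : Fin (n + 1))
    {g : (Fin (n + 1) → ℝ) → ℝ} (hg : Continuous g) :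
    ∫ x in Icc (0 : Fin (n + 1) → ℝ) 1, g x
      = ∫ y, (∫ t in (0 : ℝ)..1, g (i.insertNth t y))
          ∂Measure.pi fun _ : Fin n => volume.restrict (Icc (0 : ℝ) 1) := by
  set ν : Measure ℝ := volume.restrict (Icc 0 1)
  have : IsProbabilityMeasure ν := ⟨by simp [ν]⟩
  set e := MeasurableEquiv.piFinSuccAbove (fun _ : Fin (n + 1) => ℝ) i
  have hcell : volume.restrict (Icc (0 : Fin (n + 1) → ℝ) 1) = Measure.pi fun _ => ν := by
    rw [← pi_univ_Icc, volume_pi, Measure.restrict_pi_pi]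
    rfl
  have he : MeasurePreserving e.symm (ν.prod (Measure.pi fun _ => ν))
      (volume.restrict (Icc (0 : Fin (n + 1) → ℝ) 1)) :=
    hcell ▸ (measurePreserving_piFinSuccAbove (fun _ => ν) i).symm
  have hint : Integrable g (volume.restrict (Icc (0 : Fin (n + 1) → ℝ) 1)) :=
    hg.continuousOn.integrableOn_compact isCompact_Icc
  rw [← he.integral_comp e.symm.measurableEmbedding,
    integral_prod_symm (fun p => g (e.symm p))
      ((he.integrable_comp_emb e.symm.measurableEmbedding).2 hint)]
  congr 1 with y
  rw [intervalIntegral.integral_of_le zero_le_one, ← integral_Icc_eq_integral_Ioc]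
  rfl

theorem setIntegral_Icc_coordAvg (i : Fin d) (hf : Continuous f) :
    ∫ x in Icc (0 : Fin d → ℝ) 1, coordAvg i f x = ∫ x in Icc (0 : Fin d → ℝ) 1, f x := by
  cases d with
  | zero => exact i.elim0
  | succ n =>
    rw [setIntegral_Icc_eq_integral_insertNth i (continuous_coordAvg i hf),
      setIntegral_Icc_eq_integral_insertNth i hf]
    congr 1 with y
    simp [coordAvg, Fin.update_insertNth]

end coordAvg

noncomputable def coordPrimitive (i : Fin d) (g : (Fin d → ℝ) → ℝ) (x : Fin d → ℝ) : ℝ :=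
  ∫ t in (0 : ℝ)..x i, g (update x i t)

section coordPrimitive

variable {g : (Fin d → ℝ) → ℝ}

theorem continuous_coordPrimitive (i : Fin d) (hg : Continuous g) :
    Continuous (coordPrimitive i g) :=
  intervalIntegral.continuous_parametric_intervalIntegral_of_continuous
    (f := fun x t => g (update x i t)) (hg.comp (continuous_fst.update i continuous_snd))
    (continuous_apply i)

theorem update_add_smul_single (x : Fin d → ℝ) (i : Fin d) (s t : ℝ) :
    update (x + s • Pi.single i 1) i t = update x i t := by
  ext j
  rcases eq_or_ne j i with rfl | hj <;> simp [*]

theorem hasLineDerivAt_coordPrimitive (i : Fin d) (hg : Continuous g) (x : Fin d → ℝ) :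
    HasLineDerivAt ℝ (coordPrimitive i g) (g x) x (Pi.single i 1) := by
  have hline : Continuous fun t => g (update x i t) :=
    hg.comp (continuous_const.update i continuous_id)
  have hprim : HasDerivAt (fun s => ∫ t in (0 : ℝ)..s, g (update x i t)) (g x) (x i + 0) := by
    simpa using intervalIntegral.integral_hasDerivAt_right (a := 0) (b := x i)
      (hline.intervalIntegrable _ _) (hline.stronglyMeasurableAtFilter _ _) hline.continuousAt
  have hshift : ∀ s : ℝ, coordPrimitive i g (x + s • Pi.single i 1)
      = ∫ t in (0 : ℝ)..x i + s, g (update x i t) := fun s => by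
    simp [coordPrimitive, update_add_smul_single]
  simpa [HasLineDerivAt, hshift] using hprim.comp_const_add (x i) 0

theorem isIntPeriodic_coordPrimitive (i : Fin d) (hg : Continuous g) (hp : IsIntPeriodic g)
    (havg : ∀ x, coordAvg i g x = 0) : IsIntPeriodic (coordPrimitive i g) := fun x k => by
  set G : ℝ → ℝ := fun s => ∫ t in (0 : ℝ)..s, g (update x i t)
  have hline : Continuous fun t => g (update x i t) :=
    hg.comp (continuous_const.update i continuous_id)
  -- A primitive of a `1`-periodic function with zero mean is `1`-periodic.
  have hG : Periodic G 1 := fun s => by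
    have h := (hp.periodic_update x i).intervalIntegral_add_eq_add 0 s
      fun a b => hline.intervalIntegrable a b
    simpa [G, ← coordAvg.eq_def, havg] using h
  simpa [coordPrimitive, hp.update_add] using hG.int_mul (k i) (x i)

end coordPrimitive

theorem eq_of_forall_update_eq {g : (Fin d → ℝ) → ℝ} (h : ∀ i x t, g (update x i t) = g x)
    (x y : Fin d → ℝ) : g x = g y := by
  classical
  have key : ∀ s : Finset (Fin d), g (s.piecewise y x) = g x := by
    intro s
    induction s using Finset.induction_on with
    | empty => simp
    | insert j s _ ih => rw [Finset.piecewise_insert, h, ih]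
  simpa using (key Finset.univ).symm

noncomputable def partialAvg (R : (Fin d → ℝ) → ℝ) : ℕ → (Fin d → ℝ) → ℝ
  | 0 => R
  | j + 1 => if h : j < d then coordAvg ⟨j, h⟩ (partialAvg R j) else partialAvg R j

section partialAvg

variable {R : (Fin d → ℝ) → ℝ}

theorem partialAvg_succ (i : Fin d) :
    partialAvg R (i + 1) = coordAvg i (partialAvg R i) := by
  simp [partialAvg]

theorem continuous_partialAvg (hc : Continuous R) (j : ℕ) : Continuous (partialAvg R j) := by
  induction j with
  | zero => exact hc
  | succ j ih =>
    unfold partialAvg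
    split_ifs
    exacts [continuous_coordAvg _ ih, ih]

theorem isIntPeriodic_partialAvg (hp : IsIntPeriodic R) (j : ℕ) :
    IsIntPeriodic (partialAvg R j) := by
  induction j with
  | zero => exact hp
  | succ j ih =>
    unfold partialAvg
    split_ifs
    exacts [isIntPeriodic_coordAvg _ ih, ih]

theorem partialAvg_update {j : ℕ} {i : Fin d} (hij : i < j) (x : Fin d → ℝ) (t : ℝ) :
    partialAvg R j (update x i t) = partialAvg R j x := by
  induction j generalizing x t with
  | zero => omega
  | succ j ih =>
    unfold partialAvg
    split_ifs with hj
    · rcases eq_or_ne i ⟨j, hj⟩ with rfl | hne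
      · exact coordAvg_update_self _ _ _
      · have hij' : (i : ℕ) < j := by
          have : (i : ℕ) ≠ j := fun h => hne (Fin.ext h)
          omega
        exact coordAvg_update_of_ne hne (fun x t => ih hij' x t) x t
    · exact ih (by omega) x t

theorem setIntegral_Icc_partialAvg (hc : Continuous R) (j : ℕ) :
    ∫ x in Icc (0 : Fin d → ℝ) 1, partialAvg R j x = ∫ x in Icc (0 : Fin d → ℝ) 1, R x := by
  induction j with
  | zero => rfl
  | succ j ih =>
    unfold partialAvg
    split_ifs
    · rw [setIntegral_Icc_coordAvg _ (continuous_partialAvg hc j), ih]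
    · exact ih

theorem partialAvg_eq_setIntegral (hc : Continuous R) (x : Fin d → ℝ) :
    partialAvg R d x = ∫ y in Icc (0 : Fin d → ℝ) 1, R y := by
  have hconst : ∀ y, partialAvg R d y = partialAvg R d x :=
    fun y => eq_of_forall_update_eq (fun i => partialAvg_update i.isLt) y x
  rw [← setIntegral_Icc_partialAvg hc d, setIntegral_congr_fun measurableSet_Icc
    fun y _ => hconst y, setIntegral_Icc_zero_one_const]

end partialAvg

structure IsMeanZeroPeriodic (f : (Fin d → ℝ) → ℝ) : Prop where
  continuous : Continuous f
  isIntPeriodic : IsIntPeriodic f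
  setIntegral_Icc_eq_zero : ∫ x in Icc (0 : Fin d → ℝ) 1, f x = 0

theorem isMeanZeroPeriodic_sub_setIntegral {f : (Fin d → ℝ) → ℝ} (hc : Continuous f)
    (hp : IsIntPeriodic f) :
    IsMeanZeroPeriodic fun x => f x - ∫ y in Icc (0 : Fin d → ℝ) 1, f y where
  continuous := hc.sub continuous_const
  isIntPeriodic x k := by simp only [hp x k]
  setIntegral_Icc_eq_zero := by
    rw [integral_sub (hc.continuousOn.integrableOn_compact isCompact_Icc)
      (continuous_const.continuousOn.integrableOn_compact isCompact_Icc),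
      setIntegral_Icc_zero_one_const, sub_self]

theorem IsMeanZeroPeriodic.exists_potentials {R : (Fin d → ℝ) → ℝ} (hR : IsMeanZeroPeriodic R) :
    ∃ Q D : Fin d → (Fin d → ℝ) → ℝ, (∀ i, IsMeanZeroPeriodic (Q i)) ∧
      (∀ i, Continuous (D i) ∧ IsIntPeriodic (D i)) ∧
      (∀ i x, HasLineDerivAt ℝ (Q i) (D i x) x (Pi.single i 1)) ∧ ∀ x, ∑ i, D i x = R x := by
  have hAc := continuous_partialAvg hR.continuous
  have hAp := isIntPeriodic_partialAvg hR.isIntPeriodic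
  -- `partialAvg R (i + 1)` is the average of `partialAvg R i` along the `i`-th coordinate,
  -- so `D i` has zero mean there.
  set D : Fin d → (Fin d → ℝ) → ℝ := fun i x => partialAvg R i x - partialAvg R (i + 1) x
  have hDc : ∀ i, Continuous (D i) := fun i => (hAc i).sub (hAc (i + 1))
  have hDp : ∀ i, IsIntPeriodic (D i) := fun i x k => by simp only [D, hAp i x k, hAp (i + 1) x k]
  have hDavg : ∀ i x, coordAvg i (D i) x = 0 := fun i x => by
    have hline : Continuous fun t => partialAvg R i (update x i t) :=
      (hAc i).comp (continuous_const.update i continuous_id)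
    simp only [coordAvg, D, partialAvg_update (Nat.lt_succ_self i)]
    rw [intervalIntegral.integral_sub (hline.intervalIntegrable _ _) intervalIntegrable_const,
      ← coordAvg.eq_def, ← partialAvg_succ]
    simp
  refine ⟨fun i x => coordPrimitive i (D i) x - ∫ y in Icc 0 1, coordPrimitive i (D i) y, D,
    fun i => isMeanZeroPeriodic_sub_setIntegral (continuous_coordPrimitive i (hDc i))
      (isIntPeriodic_coordPrimitive i (hDc i) (hDp i) (hDavg i)),
    fun i => ⟨hDc i, hDp i⟩,
    fun i x => (hasLineDerivAt_coordPrimitive i (hDc i) x).sub_const _, fun x => ?_⟩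
  rw [Fin.sum_univ_eq_sum_range (fun j => partialAvg R j x - partialAvg R (j + 1) x),
    Finset.sum_range_sub',
    partialAvg_eq_setIntegral hR.continuous, hR.setIntegral_Icc_eq_zero, sub_zero]
  rfl

section IntegrationByParts

variable {E : Type*} [NormedAddCommGroup E] [NormedSpace ℝ E]

theorem HasLineDerivAt.comp_smul {g : E → ℝ} {g' : ℝ} {x v : E} (c : ℝ)
    (h : HasLineDerivAt ℝ g g' (c • x) v) : HasLineDerivAt ℝ (fun y => g (c • y)) (c * g') x v := by
  have h' := h.smul c
  rw [HasLineDerivAt] at h' ⊢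
  convert h' using 1
  · ext t
    simp only [smul_add, smul_comm c t]
  · rw [smul_eq_mul]

variable [FiniteDimensional ℝ E] [MeasurableSpace E] [BorelSpace E] {μ : Measure E}
  [μ.IsAddHaarMeasure]

theorem integral_comp_smul_mul_lineDerivOp {g g' : E → ℝ} {v : E} {C C' : ℝ} (hg : Continuous g)
    (hg' : Continuous g') (hgC : ∀ x, ‖g x‖ ≤ C) (hg'C : ∀ x, ‖g' x‖ ≤ C')
    (hderiv : ∀ x, HasLineDerivAt ℝ g (g' x) x v) (φ : 𝓢(E, ℝ)) (c : ℝ) :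
    ∫ x, g (c • x) * ∂_{v} φ x ∂μ = -c * ∫ x, g' (c • x) * φ x ∂μ := by
  have hsmul : Continuous fun x : E => c • x := continuous_const_smul c
  have hint : ∀ ψ : 𝓢(E, ℝ), Integrable (fun x => g (c • x) * ψ x) μ := fun ψ =>
    ψ.integrable.bdd_mul (hg.comp hsmul).aestronglyMeasurable (Eventually.of_forall fun x => hgC _)
  have hint' : Integrable (fun x => c * g' (c • x) * φ x) μ :=
    φ.integrable.bdd_mul (c := ‖c‖ * C')
      (continuous_const.mul (hg'.comp hsmul)).aestronglyMeasurable
      (Eventually.of_forall fun x => by rw [norm_mul]; gcongr; exact hg'C _)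
  have key := integral_bilinear_hasLineDerivAt_right_eq_neg_left_of_integrable
    (B := ContinuousLinearMap.mul ℝ ℝ) hint' (hint (∂_{v} φ)) (hint φ)
    (fun x _ => HasLineDerivAt.comp_smul c (hderiv (c • x)))
    (fun x _ => (φ.hasFDerivAt x).hasLineDerivAt v)
  simpa only [ContinuousLinearMap.mul_apply', mul_assoc, integral_const_mul, neg_mul] using key

end IntegrationByParts

theorem IsMeanZeroPeriodic.exists_integral_comp_smul_mul_eq {R : (Fin d → ℝ) → ℝ}
    (hR : IsMeanZeroPeriodic R) :
    ∃ Q : Fin d → (Fin d → ℝ) → ℝ, (∀ i, IsMeanZeroPeriodic (Q i)) ∧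
      ∀ (φ : 𝓢(Fin d → ℝ, ℝ)) {ε : ℝ}, ε ≠ 0 →
        ∫ x, R (ε⁻¹ • x) * φ x
          = -ε * ∑ i, ∫ x, Q i (ε⁻¹ • x) * ∂_{(Pi.single i 1 : Fin d → ℝ)} φ x := by
  obtain ⟨Q, D, hQ, hD, hderiv, hsum⟩ := hR.exists_potentials
  refine ⟨Q, hQ, fun φ ε hε => ?_⟩
  choose CQ hCQ using fun i => (hQ i).isIntPeriodic.exists_bound (hQ i).continuous
  choose CD hCD using fun i => (hD i).2.exists_bound (hD i).1
  have hint : ∀ i, Integrable fun x => D i (ε⁻¹ • x) * φ x := fun i =>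
    φ.integrable.bdd_mul ((hD i).1.comp (continuous_const_smul _)).aestronglyMeasurable
      (Eventually.of_forall fun x => hCD i _)
  have hibp : ∀ i, ∫ x, Q i (ε⁻¹ • x) * ∂_{(Pi.single i 1 : Fin d → ℝ)} φ x
      = -ε⁻¹ * ∫ x, D i (ε⁻¹ • x) * φ x := fun i =>
    integral_comp_smul_mul_lineDerivOp (hQ i).continuous (hD i).1 (hCQ i) (hCD i) (hderiv i) φ _
  simp only [hibp, ← Finset.mul_sum, ← integral_finsetSum _ fun i _ => hint i, ← Finset.sum_mul,
    hsum]
  field_simp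

theorem IsMeanZeroPeriodic.integral_comp_smul_mul_isBigO {R : (Fin d → ℝ) → ℝ}
    (hR : IsMeanZeroPeriodic R) (φ : 𝓢(Fin d → ℝ, ℝ)) (k : ℕ) :
    (fun ε : ℝ => ∫ x, R (ε⁻¹ • x) * φ x) =O[𝓝[≠] 0] fun ε => ε ^ k := by
  induction k generalizing R φ with
  | zero =>
    obtain ⟨C, hC⟩ := hR.isIntPeriodic.exists_bound hR.continuous
    refine Asymptotics.IsBigO.of_bound (C * ∫ x, ‖φ x‖) (Eventually.of_forall fun ε => ?_)
    rw [pow_zero, norm_one, mul_one, ← integral_const_mul]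
    refine norm_integral_le_of_norm_le (φ.integrable.norm.const_mul C)
      (Eventually.of_forall fun x => ?_)
    rw [norm_mul]
    exact mul_le_mul_of_nonneg_right (hC _) (norm_nonneg _)
  | succ k ih =>
    obtain ⟨Q, hQ, hRQ⟩ := hR.exists_integral_comp_smul_mul_eq
    have hsum : (fun ε : ℝ => ∑ i, ∫ x, Q i (ε⁻¹ • x) * ∂_{(Pi.single i 1 : Fin d → ℝ)} φ x)
        =O[𝓝[≠] 0] fun ε => ε ^ k :=
      Asymptotics.IsBigO.fun_sum fun i _ => ih (hQ i) _
    refine ((Asymptotics.isBigO_refl id _).mul hsum).neg_left.congr' ?_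
      (Eventually.of_forall fun ε => (pow_succ' ε k).symm)
    filter_upwards [self_mem_nhdsWithin] with ε hε
    rw [hRQ φ hε, neg_mul, id]

theorem tendsto_div_pow_of_isBigO_pow_succ {l : Filter ℝ} (hl : l ≤ 𝓝 0) {f : ℝ → ℝ} {k : ℕ}
    (hf : f =O[l] fun ε => ε ^ (k + 1)) : Tendsto (fun ε => f ε / ε ^ k) l (𝓝 0) := by
  have hε : (fun ε : ℝ => ε ^ (k + 1) * (ε ^ k)⁻¹) = id := by
    ext ε
    rcases eq_or_ne ε 0 with rfl | hε
    · simp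
    · rw [id, pow_succ', mul_inv_cancel_right₀ (pow_ne_zero k hε)]
  refine (hf.mul (Asymptotics.isBigO_refl (fun ε : ℝ => (ε ^ k)⁻¹) l)).trans_tendsto ?_
  rw [hε]
  exact tendsto_id.mono_left hl

end PeriodicOscillation

theorem stmt_8_general (d : ℕ)
    (P : (Fin d → ℝ) → ℝ) (hPcont : Continuous P)
    (hPper : ∀ (x : Fin d → ℝ) (k : Fin d → ℤ), P (x + fun i => (k i : ℝ)) = P x)
    (hPavg : ∫ x in Set.Icc (0 : Fin d → ℝ) 1, P x = 0)
    (φ : SchwartzMap (Fin d → ℝ) ℝ) :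
    ∀ k : ℕ, Tendsto (fun ε : ℝ => (∫ x : Fin d → ℝ, P (ε⁻¹ • x) * φ x) / ε ^ k)
      (nhdsWithin 0 (Set.Ioi 0)) (nhds 0) := fun k =>
  PeriodicOscillation.tendsto_div_pow_of_isBigO_pow_succ nhdsWithin_le_nhds
    ((PeriodicOscillation.IsMeanZeroPeriodic.integral_comp_smul_mul_isBigO
      ⟨hPcont, hPper, hPavg⟩ φ (k + 1)).mono (nhdsWithin_mono _ fun _ h => ne_of_gt h))

theorem stmt_8 (d : ℕ) (hd : 1 ≤ d)
    (P : (Fin d → ℝ) → ℝ) (hPcont : Continuous P)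
    (hPper : ∀ (x : Fin d → ℝ) (k : Fin d → ℤ), P (x + fun i => (k i : ℝ)) = P x)
    (hPavg : ∫ x in Set.Icc (0 : Fin d → ℝ) 1, P x = 0)
    (φ : SchwartzMap (Fin d → ℝ) ℝ) :
    ∀ k : ℕ, Tendsto (fun ε : ℝ => (∫ x : Fin d → ℝ, P (ε⁻¹ • x) * φ x) / ε ^ k)
      (nhdsWithin 0 (Set.Ioi 0)) (nhds 0) :=
  stmt_8_general d P hPcont hPper hPavg φ
end
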